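/- arXiv:2502.06754 — 2 statements merged into one kernel-verified Lean document; each statement's English description precedes it below -/
import Mathlib

section
/- Let N be a Poisson random variable with mean m > 0, and let (X_i)_{i ∈ ℕ} be i.i.d. nonnegative real random variables independent of N, with q := E[exp(-X_0)]. Set S := Σ_{i < N} X_i. Then E[exp(-S) · 1_{N even}] = e^{-m} cosh(m q), and consequently the conditional expectation given that N is even satisfies E[exp(-S) | N is even] = cosh(m q)/cosh(m). -/
/-!
Split the even event into the fibres `{N = 2k}`. On such a fibre `S` is the sum of the first `2k`
of the `X i`, and since `N` is independent of the sequence `X`, the integral of `exp (-S)` over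
the fibre factors as `P[N = 2k] * E[exp (-(X 0 + ⋯ + X (2k-1)))] = e^{-m} m^{2k}/(2k)! * q^{2k}`
by the i.i.d. assumption. Summing over `k` gives the even part `e^{-m} cosh (m q)` of the
exponential series; the same computation with the integrand `1` gives `P[N even] = e^{-m} cosh m`.
-/

open MeasureTheory ProbabilityTheory

open Finset Real

namespace ProbabilityTheory

variable {Ω : Type*} [MeasurableSpace Ω] {μ : Measure Ω}

lemma iIndepFun.integral_prod_range_comp_eq_pow {X : ℕ → Ω → ℝ} (hiid : iIndepFun X μ)
    (hX : ∀ i, Measurable (X i)) (hident : ∀ i, μ.map (X i) = μ.map (X 0))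
    {f : ℝ → ℝ} (hf : Measurable f) (n : ℕ) :
    ∫ ω, ∏ i ∈ range n, f (X i ω) ∂μ = (∫ ω, f (X 0 ω) ∂μ) ^ n := by
  have hsame : ∀ i, ∫ ω, f (X i ω) ∂μ = ∫ ω, f (X 0 ω) ∂μ := fun i => by
    rw [← integral_map (hX i).aemeasurable hf.aestronglyMeasurable, hident i,
      integral_map (hX 0).aemeasurable hf.aestronglyMeasurable]
  simp_rw [← Fin.prod_univ_eq_prod_range (fun i => f (X i _))]
  rw [(hiid.precomp Fin.val_injective).integral_fun_prod_comp (fun i => (hX i).aemeasurable)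
    (fun _ => hf.aestronglyMeasurable)]
  simp [hsame]

lemma IndepFun.setIntegral_preimage_eq_mul {β γ : Type*} [MeasurableSpace β] [MeasurableSpace γ]
    {N : Ω → β} {Z : Ω → γ} (hNZ : IndepFun N Z μ) (hN : Measurable N)
    (hZ : AEMeasurable Z μ)
    {s : Set β} (hs : MeasurableSet s) {g : γ → ℝ} (hg : AEStronglyMeasurable g (μ.map Z)) :
    ∫ ω in N ⁻¹' s, g (Z ω) ∂μ = μ.real (N ⁻¹' s) * ∫ ω, g (Z ω) ∂μ :=
  ((IndepFun_iff_Indep N Z μ).1 hNZ).setIntegral_eq_mul hN.comap_le hZ ⟨s, hs, rfl⟩ hg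

lemma IndepFun.setIntegral_exp_neg_sum_range {N : Ω → ℕ} {X : ℕ → Ω → ℝ}
    (hindep : IndepFun N (fun ω i => X i ω) μ)
    (hN : Measurable N) (hX : ∀ i, Measurable (X i)) (n : ℕ) :
    ∫ ω in {ω | N ω = n}, exp (-∑ i ∈ range (N ω), X i ω) ∂μ
      = μ.real {ω | N ω = n} * ∫ ω, exp (-∑ i ∈ range n, X i ω) ∂μ := by
  have hg : Measurable fun x : ℕ → ℝ => exp (-∑ i ∈ range n, x i) := by fun_prop
  calc ∫ ω in {ω | N ω = n}, exp (-∑ i ∈ range (N ω), X i ω) ∂μ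
      = ∫ ω in N ⁻¹' {n}, exp (-∑ i ∈ range n, X i ω) ∂μ :=
        setIntegral_congr_fun (hN (measurableSet_singleton _)) fun ω hω => by rw [hω.out]
    _ = μ.real {ω | N ω = n} * ∫ ω, exp (-∑ i ∈ range n, X i ω) ∂μ :=
        hindep.setIntegral_preimage_eq_mul hN (measurable_pi_lambda _ hX).aemeasurable
          (measurableSet_singleton _) hg.aestronglyMeasurable

end ProbabilityTheory

namespace MeasureTheory

variable {Ω : Type*} [MeasurableSpace Ω] {μ : Measure Ω}

lemma hasSum_setIntegral_even {N : Ω → ℕ} (hN : Measurable N) {f : Ω → ℝ}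
    (hf : Integrable f μ) :
    HasSum (fun k => ∫ ω in {ω | N ω = 2 * k}, f ω ∂μ)
      (∫ ω in {ω | Even (N ω)}, f ω ∂μ) := by
  have hunion : {ω | Even (N ω)} = ⋃ k, {ω | N ω = 2 * k} := by
    ext ω
    simp only [Set.mem_ofPred_eq, Set.mem_iUnion, even_iff_exists_two_mul]
  rw [hunion]
  refine hasSum_integral_iUnion (fun k => hN (measurableSet_singleton _)) ?_ hf.integrableOn
  intro i j hij
  simp only [Function.onFun, Set.disjoint_left, Set.mem_ofPred_eq]
  omega

lemma measurable_sum_range_random_index {N : Ω → ℕ}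
    (hN : Measurable N) {X : ℕ → Ω → ℝ} (hX : ∀ i, Measurable (X i)) :
    Measurable fun ω => ∑ i ∈ range (N ω), X i ω := by
  have : Measurable fun p : Ω × ℕ => ∑ i ∈ range p.2, X i p.1 :=
    measurable_from_prod_countable_left fun n =>
      show Measurable fun ω => ∑ i ∈ range n, X i ω from measurable_sum _ fun i _ => hX i
  exact this.comp (measurable_id.prodMk hN)

end MeasureTheory

theorem compound_poisson_laplace_even_general
    {Ω : Type*} [MeasurableSpace Ω] (μ : Measure Ω) [IsProbabilityMeasure μ]
    (m : ℝ)
    (N : Ω → ℕ) (hN : Measurable N)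
    (hlaw : ∀ n : ℕ, μ {ω | N ω = n} =
      ENNReal.ofReal (Real.exp (-m) * m ^ n / n.factorial))
    (X : ℕ → Ω → ℝ) (hX : ∀ i, Measurable (X i))
    (hpos : ∀ i, ∀ ω, 0 ≤ X i ω)
    (hident : ∀ i, Measure.map (X i) μ = Measure.map (X 0) μ)
    (hiid : iIndepFun X μ)
    (hindep : IndepFun N (fun ω i => X i ω) μ)
    (q : ℝ) (hq : q = ∫ ω, Real.exp (-(X 0 ω)) ∂μ) :
    (∫ ω in {ω | Even (N ω)},
        Real.exp (-(∑ i ∈ Finset.range (N ω), X i ω)) ∂μ)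
      = Real.exp (-m) * Real.cosh (m * q) ∧
    (∫ ω in {ω | Even (N ω)},
        Real.exp (-(∑ i ∈ Finset.range (N ω), X i ω)) ∂μ)
        / (μ {ω | Even (N ω)}).toReal
      = Real.cosh (m * q) / Real.cosh m := by
  have hmass : ∀ k,
      μ.real {ω | N ω = 2 * k} = exp (-m) * (m ^ (2 * k) / (2 * k).factorial) := by
    intro k
    have hpow : 0 ≤ m ^ (2 * k) := (even_two_mul k).pow_nonneg m
    rw [measureReal_def, hlaw, ENNReal.toReal_ofReal (by positivity)]
    ring
  have hmoment : ∀ n, ∫ ω, exp (-∑ i ∈ range n, X i ω) ∂μ = q ^ n := fun n => by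
    simp_rw [← sum_neg_distrib, exp_sum, hq]
    exact hiid.integral_prod_range_comp_eq_pow hX hident (measurable_exp.comp measurable_neg) n
  have hfiber : ∀ k, ∫ ω in {ω | N ω = 2 * k}, exp (-∑ i ∈ range (N ω), X i ω) ∂μ
      = exp (-m) * ((m * q) ^ (2 * k) / (2 * k).factorial) := fun k => by
    rw [hindep.setIntegral_exp_neg_sum_range hN hX, hmoment, hmass, mul_pow]
    ring
  have hint : Integrable (fun ω => exp (-∑ i ∈ range (N ω), X i ω)) μ := by
    have hS := measurable_sum_range_random_index hN hX
    refine .of_bound (measurable_exp.comp hS.neg).aestronglyMeasurable 1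
      (ae_of_all _ fun ω => ?_)
    rw [norm_of_nonneg (exp_pos _).le, exp_le_one_iff, neg_nonpos]
    exact sum_nonneg fun i _ => hpos i ω
  have hmeasure : μ.real {ω | Even (N ω)} = exp (-m) * cosh m := by
    have := hasSum_setIntegral_even (μ := μ) hN (integrable_const (1 : ℝ))
    simp only [setIntegral_const, smul_eq_mul, mul_one, hmass] at this
    exact this.unique ((hasSum_cosh m).mul_left _)
  have hlaplace := ((hasSum_setIntegral_even hN hint).congr_fun fun k => (hfiber k).symm).unique
    ((hasSum_cosh (m * q)).mul_left (exp (-m)))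
  refine ⟨hlaplace, ?_⟩
  rw [hlaplace, ← measureReal_def, hmeasure, mul_div_mul_left _ _ (exp_ne_zero _)]

/-- **Laplace transform of a compound Poisson sum on the even-parity event.**
If `N` is Poisson with mean `m > 0` and `(X i)` are i.i.d. nonnegative random
variables independent of `N`, with `q = E[exp(-X 0)]`, then for
`S = ∑_{i < N} X i` one has `E[exp(-S) 1_{N even}] = e^{-m} cosh (m q)` and
`E[exp(-S) | N even] = cosh (m q) / cosh m`. -/
theorem compound_poisson_laplace_even
    {Ω : Type*} [MeasurableSpace Ω] (μ : Measure Ω) [IsProbabilityMeasure μ]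
    (m : ℝ) (hm : 0 < m)
    (N : Ω → ℕ) (hN : Measurable N)
    (hlaw : ∀ n : ℕ, μ {ω | N ω = n} =
      ENNReal.ofReal (Real.exp (-m) * m ^ n / n.factorial))
    (X : ℕ → Ω → ℝ) (hX : ∀ i, Measurable (X i))
    (hpos : ∀ i, ∀ ω, 0 ≤ X i ω)
    (hident : ∀ i, Measure.map (X i) μ = Measure.map (X 0) μ)
    (hiid : iIndepFun X μ)
    (hindep : IndepFun N (fun ω i => X i ω) μ)
    (q : ℝ) (hq : q = ∫ ω, Real.exp (-(X 0 ω)) ∂μ) :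
    (∫ ω in {ω | Even (N ω)},
        Real.exp (-(∑ i ∈ Finset.range (N ω), X i ω)) ∂μ)
      = Real.exp (-m) * Real.cosh (m * q) ∧
    (∫ ω in {ω | Even (N ω)},
        Real.exp (-(∑ i ∈ Finset.range (N ω), X i ω)) ∂μ)
        / (μ {ω | Even (N ω)}).toReal
      = Real.cosh (m * q) / Real.cosh m :=
  compound_poisson_laplace_even_general μ m N hN hlaw X hX hpos hident hiid hindep q hq
end

section
/- Let μ be the centered Gaussian measure on ℝ with variance v > 0, let k ≥ 0, and define F(φ) := ∫ exp(-k (x + φ)²) dμ(x) for φ ∈ ℝ. Then for all φ₁, φ₂ ∈ ℝ: F(φ₁ + φ₂) + F(φ₁ - φ₂) = 2 · (F(φ₁) F(φ₂) / F(0)) · cosh( 2 k φ₁ φ₂ / (1 + 2 k v) ), and F(φ₁ + φ₂) - F(φ₁ - φ₂) = -2 · (F(φ₁) F(φ₂) / F(0)) · sinh( 2 k φ₁ φ₂ / (1 + 2 k v) ). -/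
/-!
Completing the square against the Gaussian density gives the closed form
`F φ = (1 + 2kv)^(-1/2) * exp (-(k / (1 + 2kv)) φ²)`, so `F` is itself a Gaussian in `φ`.
For any `f φ = C exp (-c φ²)`, expanding `(φ₁ ± φ₂)²` gives
`f (φ₁ ± φ₂) = f φ₁ f φ₂ / f 0 * exp (∓ 2c φ₁ φ₂)`; adding and subtracting these two
identities produces the `cosh` and `sinh` factors.
-/

open MeasureTheory ProbabilityTheory Real

theorem cosh_sinh_of_eq_mul_exp_neg_mul_sq {f : ℝ → ℝ} {C c : ℝ} (hC : C ≠ 0)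
    (hf : ∀ x, f x = C * exp (-c * x ^ 2)) (a b : ℝ) :
    f (a + b) + f (a - b) = 2 * (f a * f b / f 0) * cosh (2 * c * a * b) ∧
      f (a + b) - f (a - b) = -2 * (f a * f b / f 0) * sinh (2 * c * a * b) := by
  have map_add_eq : ∀ x y, f (x + y) = f x * f y / f 0 * exp (-(2 * c * x * y)) := by
    intro x y
    simp only [hf, zero_pow two_ne_zero, mul_zero, exp_zero, mul_one]
    rw [mul_mul_mul_comm, mul_assoc C C, mul_div_cancel_left₀ _ hC, mul_assoc, ← exp_add,
      ← exp_add]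
    congr 2
    ring
  have f_neg : f (-b) = f b := by rw [hf, hf, neg_sq]
  rw [sub_eq_add_neg a b, map_add_eq, map_add_eq, f_neg, cosh_eq, sinh_eq]
  constructor <;> ring_nf

theorem integral_exp_neg_mul_add_sq_gaussianReal {v : NNReal} {k : ℝ} (hkv : 0 < 1 + 2 * k * v)
    (φ : ℝ) :
    ∫ x, exp (-k * (x + φ) ^ 2) ∂gaussianReal 0 v
      = (√(1 + 2 * k * v))⁻¹ * exp (-(k / (1 + 2 * k * v)) * φ ^ 2) := by
  rcases eq_or_ne v 0 with rfl | hv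
  · simp [gaussianReal_zero_var]
  have hv' : (0 : ℝ) < v := by positivity
  set a := 1 + 2 * k * v with ha_def
  set b := a / (2 * v) with hb_def
  have complete_sq : ∀ x, gaussianPDFReal 0 v x * exp (-k * (x + φ) ^ 2)
      = (√(2 * π * v))⁻¹ * (exp (-(k / a) * φ ^ 2) * exp (-b * (x + k * φ / b) ^ 2)) := by
    intro x
    rw [gaussianPDFReal, mul_assoc, ← exp_add, ← exp_add]
    congr 2
    rw [hb_def]
    field_simp
    rw [ha_def]
    ring
  rw [integral_gaussianReal_eq_integral_smul hv]
  simp only [smul_eq_mul, complete_sq, integral_const_mul,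
    integral_add_right_eq_self (fun y => exp (-b * y ^ 2)), integral_gaussian]
  have sqrt_eq : √(π / b) = √(2 * π * v) / √a := by
    rw [hb_def, ← sqrt_div' _ hkv.le]
    congr 1
    field_simp
  rw [sqrt_eq]
  field_simp

theorem gaussian_exp_functional_cosh_sinh_general
    (v : NNReal) (k : ℝ) (hk : 0 ≤ k)
    (F : ℝ → ℝ)
    (hF : ∀ φ : ℝ, F φ = ∫ x, Real.exp (-k * (x + φ) ^ 2) ∂(gaussianReal 0 v)) :
    ∀ φ₁ φ₂ : ℝ,
      F (φ₁ + φ₂) + F (φ₁ - φ₂)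
        = 2 * (F φ₁ * F φ₂ / F 0)
          * Real.cosh (2 * k * φ₁ * φ₂ / (1 + 2 * k * v)) ∧
      F (φ₁ + φ₂) - F (φ₁ - φ₂)
        = -2 * (F φ₁ * F φ₂ / F 0)
          * Real.sinh (2 * k * φ₁ * φ₂ / (1 + 2 * k * v)) := by
  intro φ₁ φ₂
  have hkv : 0 < 1 + 2 * k * v := by positivity
  have hF_closed φ : F φ = (√(1 + 2 * k * v))⁻¹ * exp (-(k / (1 + 2 * k * v)) * φ ^ 2) :=
    (hF φ).trans (integral_exp_neg_mul_add_sq_gaussianReal hkv φ)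
  rw [show 2 * k * φ₁ * φ₂ / (1 + 2 * k * v) = 2 * (k / (1 + 2 * k * v)) * φ₁ * φ₂ by ring]
  exact cosh_sinh_of_eq_mul_exp_neg_mul_sq (by positivity) hF_closed φ₁ φ₂

/-- **cosh/sinh factorization of the Gaussian exponential functional.**
Let `μ` be the centered Gaussian measure on `ℝ` with variance `v > 0`, `k ≥ 0`,
and `F φ = ∫ exp (-k (x + φ)²) dμ(x)`. Then for all `φ₁ φ₂`,
`F (φ₁ + φ₂) + F (φ₁ - φ₂) = 2 (F φ₁ F φ₂ / F 0) cosh (2 k φ₁ φ₂ / (1 + 2kv))`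
and
`F (φ₁ + φ₂) - F (φ₁ - φ₂) = -2 (F φ₁ F φ₂ / F 0) sinh (2 k φ₁ φ₂ / (1 + 2kv))`. -/
theorem gaussian_exp_functional_cosh_sinh
    (v : NNReal) (hv : 0 < v) (k : ℝ) (hk : 0 ≤ k)
    (F : ℝ → ℝ)
    (hF : ∀ φ : ℝ, F φ = ∫ x, Real.exp (-k * (x + φ) ^ 2) ∂(gaussianReal 0 v)) :
    ∀ φ₁ φ₂ : ℝ,
      F (φ₁ + φ₂) + F (φ₁ - φ₂)
        = 2 * (F φ₁ * F φ₂ / F 0)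
          * Real.cosh (2 * k * φ₁ * φ₂ / (1 + 2 * k * v)) ∧
      F (φ₁ + φ₂) - F (φ₁ - φ₂)
        = -2 * (F φ₁ * F φ₂ / F 0)
          * Real.sinh (2 * k * φ₁ * φ₂ / (1 + 2 * k * v)) :=
  gaussian_exp_functional_cosh_sinh_general v k hk F hF
end
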